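/- REINFORCE-type gradient of the variational free energy: let S be a finite nonempty set, E : S → ℝ, β > 0, and let q : ℝ → S → ℝ be a parametrized family such that q(θ,s) > 0 for all θ and s, Σ_{s∈S} q(θ,s) = 1 for all θ, and for every s the map θ ↦ q(θ,s) is differentiable at θ₀. Then the function θ ↦ Σ_{s∈S} q(θ,s)·(E(s) + (1/β)·ln q(θ,s)) is differentiable at θ₀ and its derivative at θ₀ equals Σ_{s∈S} q(θ₀,s)·(E(s) + (1/β)·ln q(θ₀,s))·(q'(θ₀,s)/q(θ₀,s)), where q'(θ₀,s) denotes the derivative of θ ↦ q(θ,s) at θ₀ (so q'(θ₀,s)/q(θ₀,s) is the derivative of ln q(θ,s)). -/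

import Mathlib

/-! Differentiating termwise, the energy part of `q (E + ln q / β)` contributes `q' E` and the
entropy part contributes `q' (ln q + 1) / β`. The leftover `Σ q' / β` vanishes because the total
mass `Σ q(θ, s)` does not depend on `θ`, and `q' = q · (ln q)'` puts the result in REINFORCE form. -/

theorem Finset.sum_hasDerivAt_eq_zero_of_sum_const {𝕜 ι : Type*} [NontriviallyNormedField 𝕜]
    {t : Finset ι} {f : ι → 𝕜 → 𝕜} {f' : ι → 𝕜} {x c : 𝕜}
    (hf : ∀ i ∈ t, HasDerivAt (f i) (f' i) x) (hsum : ∀ y, ∑ i ∈ t, f i y = c) :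
    ∑ i ∈ t, f' i = 0 := by
  have h : HasDerivAt (fun y => ∑ i ∈ t, f i y) (∑ i ∈ t, f' i) x := HasDerivAt.fun_sum hf
  simp only [hsum] at h
  exact h.unique (hasDerivAt_const x c)

theorem HasDerivAt.mul_log {f : ℝ → ℝ} {f' x : ℝ} (hf : HasDerivAt f f' x) (hx : f x ≠ 0) :
    HasDerivAt (fun y => f y * Real.log (f y)) (f' * (Real.log (f x) + 1)) x := by
  refine (hf.mul (hf.log hx)).congr_deriv ?_
  rw [mul_div_cancel₀ _ hx, mul_add, mul_one]

theorem HasDerivAt.mul_const_add_mul_log {f : ℝ → ℝ} {f' x : ℝ} (e c : ℝ)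
    (hf : HasDerivAt f f' x) (hx : f x ≠ 0) :
    HasDerivAt (fun y => f y * (e + c * Real.log (f y)))
      (f' * (e + c * Real.log (f x)) + c * f') x := by
  have hsplit : (fun y => f y * (e + c * Real.log (f y))) =
      fun y => f y * e + c * (f y * Real.log (f y)) := by
    funext y
    ring
  rw [hsplit]
  refine ((hf.mul_const e).fun_add ((hf.mul_log hx).const_mul c)).congr_deriv ?_
  ring

theorem hasDerivAt_sum_mul_const_add_mul_log {S : Type*} [Fintype S] (E : S → ℝ) (c : ℝ) {m : ℝ}
    {q : ℝ → S → ℝ} {q' : S → ℝ} {θ₀ : ℝ} (hq : ∀ s, HasDerivAt (fun θ => q θ s) (q' s) θ₀)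
    (hq₀ : ∀ s, q θ₀ s ≠ 0) (hsum : ∀ θ, ∑ s, q θ s = m) :
    HasDerivAt (fun θ => ∑ s, q θ s * (E s + c * Real.log (q θ s)))
      (∑ s, q' s * (E s + c * Real.log (q θ₀ s))) θ₀ := by
  have hterms := HasDerivAt.fun_sum fun s (_ : s ∈ Finset.univ) =>
    (hq s).mul_const_add_mul_log (E s) c (hq₀ s)
  have hmass : ∑ s, q' s = 0 :=
    Finset.sum_hasDerivAt_eq_zero_of_sum_const (fun s _ => hq s) hsum
  rwa [Finset.sum_add_distrib, ← Finset.mul_sum, hmass, mul_zero, add_zero] at hterms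

theorem reinforce_gradient_variational_free_energy_general (S : Type*) [Fintype S]
    (E : S → ℝ) (β : ℝ)
    (q : ℝ → S → ℝ) (θ₀ : ℝ)
    (hqpos : ∀ θ s, 0 < q θ s)
    (hqsum : ∀ θ, ∑ s, q θ s = 1)
    (hdiff : ∀ s, DifferentiableAt ℝ (fun θ => q θ s) θ₀) :
    HasDerivAt (fun θ => ∑ s, q θ s * (E s + (1 / β) * Real.log (q θ s)))
      (∑ s, q θ₀ s * (E s + (1 / β) * Real.log (q θ₀ s)) *
        (deriv (fun θ => q θ s) θ₀ / q θ₀ s)) θ₀ := by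
  have hq₀ : ∀ s, q θ₀ s ≠ 0 := fun s => (hqpos θ₀ s).ne'
  convert hasDerivAt_sum_mul_const_add_mul_log E (1 / β)
    (fun s => (hdiff s).hasDerivAt) hq₀ hqsum using 1
  refine Finset.sum_congr rfl fun s _ => ?_
  rw [mul_comm (q θ₀ s), mul_assoc, mul_div_cancel₀ _ (hq₀ s), mul_comm]

/-- REINFORCE-type gradient of the variational free energy: for a parametrized
family of strictly positive probability distributions `q(θ,·)` on a finite
nonempty configuration space, each `θ ↦ q(θ,s)` differentiable at `θ₀`,
the variational free energy `θ ↦ Σ q(θ,s)·(E(s) + (1/β)·ln q(θ,s))` is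
differentiable at `θ₀`, with derivative
`Σ q(θ₀,s)·(E(s) + (1/β)·ln q(θ₀,s))·(q'(θ₀,s)/q(θ₀,s))`. -/
theorem reinforce_gradient_variational_free_energy (S : Type*) [Fintype S] [Nonempty S]
    (E : S → ℝ) (β : ℝ) (hβ : 0 < β)
    (q : ℝ → S → ℝ) (θ₀ : ℝ)
    (hqpos : ∀ θ s, 0 < q θ s)
    (hqsum : ∀ θ, ∑ s, q θ s = 1)
    (hdiff : ∀ s, DifferentiableAt ℝ (fun θ => q θ s) θ₀) :
    HasDerivAt (fun θ => ∑ s, q θ s * (E s + (1 / β) * Real.log (q θ s)))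
      (∑ s, q θ₀ s * (E s + (1 / β) * Real.log (q θ₀ s)) *
        (deriv (fun θ => q θ s) θ₀ / q θ₀ s)) θ₀ :=
  reinforce_gradient_variational_free_energy_general S E β q θ₀ hqpos hqsum hdiff
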